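/- arXiv:1205.2682 — 3 statements merged into one kernel-verified Lean document; each statement's English description precedes it below -/
import Mathlib

section
/- Let c > 0 and let (F_n)_{n≥1} be a sequence of real random variables with E[F_n⁴] < ∞ and E[F_n⁴] ≤ c · (E[F_n²])² for every n. If the laws of F_n converge weakly to some Borel probability measure on ℝ, then sup_{n≥1} E[F_n²] < ∞. -/
/-!
The laws of the `F n` converge weakly, so they form a tight family: there is `R` with
`P (R < |F n|) ≤ 1 / (4c)` for every `n`. Splitting `E[F_n²]` at level `R` and bounding the tail
part by AM–GM, `x² ≤ x⁴ / (2t) + t / 2`, with `t = 2c E[F_n²]`, the fourth-moment hypothesis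
turns the tail into at most `E[F_n²] / 2`, whence `E[F_n²] ≤ 2R²`.
-/

open MeasureTheory Filter Topology
open scoped ENNReal

section WeakConvergence

variable {E : Type*} [MeasurableSpace E]

lemma tendsto_probabilityMeasure_map_of_forall_integral_tendsto [TopologicalSpace E]
    [OpensMeasurableSpace E] {Ω : Type*} [MeasurableSpace Ω] {P : Measure Ω}
    [IsProbabilityMeasure P] {X : ℕ → Ω → E} (hX : ∀ n, AEMeasurable (X n) P)
    {μ : ProbabilityMeasure E}
    (h : ∀ φ : E → ℝ, Continuous φ → (∃ C, ∀ x, |φ x| ≤ C) →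
      Tendsto (fun n => ∫ ω, φ (X n ω) ∂P) atTop (𝓝 (∫ x, φ x ∂μ))) :
    Tendsto (fun n => ProbabilityMeasure.map ⟨P, ‹_›⟩ (hX n)) atTop (𝓝 μ) := by
  refine ProbabilityMeasure.tendsto_iff_forall_integral_tendsto.2 fun φ => ?_
  convert h φ φ.continuous ⟨‖φ‖, φ.norm_coe_le_norm⟩ using 2 with n
  exact integral_map (hX n) φ.continuous.aestronglyMeasurable

lemma isTightMeasureSet_range_of_tendsto [PseudoMetricSpace E] [OpensMeasurableSpace E]
    [SecondCountableTopology E] [CompleteSpace E] {ν : ℕ → ProbabilityMeasure E}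
    {μ : ProbabilityMeasure E} (h : Tendsto ν atTop (𝓝 μ)) :
    IsTightMeasureSet (Set.range fun n => (ν n : Measure E)) := by
  have hK := h.isCompact_insert_range
  refine (isTightMeasureSet_of_isCompact_closure hK.closure).subset ?_
  rintro _ ⟨n, rfl⟩
  exact ⟨ν n, Set.mem_insert_of_mem _ ⟨n, rfl⟩, rfl⟩

end WeakConvergence

lemma IsTightMeasureSet.exists_measure_norm_gt_le {E : Type*} [NormedAddCommGroup E]
    {mE : MeasurableSpace E} {S : Set (Measure E)} (hS : IsTightMeasureSet S) {ε : ℝ≥0∞}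
    (hε : 0 < ε) : ∃ R : ℝ, ∀ ν ∈ S, ν {x | R < ‖x‖} ≤ ε := by
  obtain ⟨R, hR⟩ :=
    ((tendsto_measure_norm_gt_of_isTightMeasureSet hS).eventually_le_const hε).exists
  exact ⟨R, fun ν hν => (le_iSup₂ (f := fun ν _ => ν {x | R < ‖x‖}) ν hν).trans hR⟩

lemma sq_le_add_div_add_mul_indicator (R x : ℝ) {t : ℝ} (ht : 0 < t) :
    x ^ 2 ≤ R ^ 2 + x ^ 4 / (2 * t) + t / 2 * {y : ℝ | R < |y|}.indicator 1 x := by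
  by_cases hx : R < |x|
  · rw [Set.indicator_of_mem (show x ∈ {y : ℝ | R < |y|} from hx), Pi.one_apply, mul_one]
    have amgm : x ^ 4 / (2 * t) + t / 2 - x ^ 2 = (x ^ 2 - t) ^ 2 / (2 * t) := by
      field_simp
      ring
    have : 0 ≤ (x ^ 2 - t) ^ 2 / (2 * t) := by positivity
    linarith [sq_nonneg R]
  · rw [Set.indicator_of_notMem (show x ∉ {y : ℝ | R < |y|} from hx), mul_zero, add_zero]
    have : x ^ 2 ≤ R ^ 2 := sq_le_sq.2 ((not_lt.1 hx).trans (le_abs_self R))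
    have : 0 ≤ x ^ 4 / (2 * t) := by positivity
    linarith

section Moments

variable {Ω : Type*} [MeasurableSpace Ω] {P : Measure Ω} [IsProbabilityMeasure P] {X : Ω → ℝ}

lemma integral_sq_le_add_div_add_mul_tail (hX : MemLp X 4 P) (R : ℝ) {t : ℝ} (ht : 0 < t) :
    ∫ ω, X ω ^ 2 ∂P ≤
      R ^ 2 + (∫ ω, X ω ^ 4 ∂P) / (2 * t) + t / 2 * (P.map X).real {x | R < |x|} := by
  have hXm : AEMeasurable X P := hX.aestronglyMeasurable.aemeasurable
  have hX2 : Integrable (fun ω => X ω ^ 2) P := (hX.mono_exponent (by norm_num)).integrable_sq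
  have hX4 : Integrable (fun ω => X ω ^ 4) P :=
    (MemLp.integrable_norm_pow' (p := 4) (by exact_mod_cast hX)).congr
      (ae_of_all _ fun ω => (even_two_mul 2).pow_abs (X ω))
  have hS : MeasurableSet {x : ℝ | R < |x|} := measurableSet_lt measurable_const measurable_abs
  have htail : ∫ ω, {x : ℝ | R < |x|}.indicator 1 (X ω) ∂P = (P.map X).real {x | R < |x|} := by
    rw [← integral_indicator_one hS,
      integral_map hXm (measurable_one.indicator hS).aestronglyMeasurable]
  have hind : Integrable (fun ω => {x : ℝ | R < |x|}.indicator (1 : ℝ → ℝ) (X ω)) P :=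
    ((integrable_indicator_iff hS).2 (integrable_const (1 : ℝ)).integrableOn).comp_aemeasurable hXm
  have hmain : Integrable (fun ω => R ^ 2 + X ω ^ 4 / (2 * t)) P :=
    (integrable_const _).add (hX4.div_const _)
  calc ∫ ω, X ω ^ 2 ∂P
      ≤ ∫ ω, (R ^ 2 + X ω ^ 4 / (2 * t) + t / 2 * {x : ℝ | R < |x|}.indicator 1 (X ω)) ∂P :=
        integral_mono hX2 (hmain.add (hind.const_mul _))
          fun ω => sq_le_add_div_add_mul_indicator R (X ω) ht
    _ = _ := by
      rw [integral_add hmain (hind.const_mul _),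
        integral_add (integrable_const _) (hX4.div_const _), integral_const, probReal_univ, one_smul, integral_div, integral_const_mul, htail]

lemma integral_sq_le_of_integral_pow_four_le {c : ℝ} (hc : 0 < c) (hX : MemLp X 4 P)
    (hmom : ∫ ω, X ω ^ 4 ∂P ≤ c * (∫ ω, X ω ^ 2 ∂P) ^ 2) {R : ℝ}
    (htail : (P.map X).real {x | R < |x|} ≤ (4 * c)⁻¹) :
    ∫ ω, X ω ^ 2 ∂P ≤ 2 * R ^ 2 := by
  set m := ∫ ω, X ω ^ 2 ∂P
  rcases (integral_nonneg fun ω => sq_nonneg (X ω) : 0 ≤ m).eq_or_lt with hm | hm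
  · rw [show m = 0 from hm.symm]
    positivity
  have key := integral_sq_le_add_div_add_mul_tail hX R (t := 2 * c * m) (by positivity)
  have hfourth : (∫ ω, X ω ^ 4 ∂P) / (2 * (2 * c * m)) ≤ m / 4 := by
    rw [div_le_iff₀ (by positivity)]
    nlinarith
  have htail' : 2 * c * m / 2 * (P.map X).real {x | R < |x|} ≤ m / 4 :=
    calc _ ≤ 2 * c * m / 2 * (4 * c)⁻¹ := by gcongr
      _ = m / 4 := by field_simp
  linarith

end Moments

theorem stmt5_general {Ω : Type*} [MeasurableSpace Ω] (P : Measure Ω) [IsProbabilityMeasure P]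
    (c : ℝ) (hc : 0 < c) (F : ℕ → Ω → ℝ)
    (hF4 : ∀ n, MemLp (F n) 4 P)
    (hmom : ∀ n, ∫ ω, (F n ω) ^ 4 ∂P ≤ c * (∫ ω, (F n ω) ^ 2 ∂P) ^ 2)
    (μ : Measure ℝ) [IsProbabilityMeasure μ]
    (hweak : ∀ φ : ℝ → ℝ, Continuous φ → (∃ C, ∀ x, |φ x| ≤ C) →
      Tendsto (fun n => ∫ ω, φ (F n ω) ∂P) atTop (nhds (∫ x, φ x ∂μ))) :
    ∃ C : ℝ, ∀ n, ∫ ω, (F n ω) ^ 2 ∂P ≤ C := by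
  have hF : ∀ n, AEMeasurable (F n) P := fun n => (hF4 n).aestronglyMeasurable.aemeasurable
  have hlaw := tendsto_probabilityMeasure_map_of_forall_integral_tendsto hF (μ := ⟨μ, ‹_›⟩) hweak
  obtain ⟨R, hR⟩ := IsTightMeasureSet.exists_measure_norm_gt_le
    (isTightMeasureSet_range_of_tendsto hlaw) (ENNReal.ofReal_pos.2 (by positivity : 0 < (4 * c)⁻¹))
  refine ⟨2 * R ^ 2, fun n => integral_sq_le_of_integral_pow_four_le hc (hF4 n) (hmom n) ?_⟩
  exact ENNReal.toReal_le_of_le_ofReal (by positivity) (hR _ ⟨n, rfl⟩)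

/-- If `E[F_n⁴] ≤ c (E[F_n²])²` for every `n` and the laws of `F_n`
converge weakly to a Borel probability measure on `ℝ`, then `sup_n E[F_n²] < ∞`. -/
theorem stmt5 {Ω : Type*} [MeasurableSpace Ω] (P : Measure Ω) [IsProbabilityMeasure P]
    (c : ℝ) (hc : 0 < c) (F : ℕ → Ω → ℝ) (hFm : ∀ n, Measurable (F n))
    (hF4 : ∀ n, MemLp (F n) 4 P)
    (hmom : ∀ n, ∫ ω, (F n ω) ^ 4 ∂P ≤ c * (∫ ω, (F n ω) ^ 2 ∂P) ^ 2)
    (μ : Measure ℝ) [IsProbabilityMeasure μ]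
    (hweak : ∀ φ : ℝ → ℝ, Continuous φ → (∃ C, ∀ x, |φ x| ≤ C) →
      Tendsto (fun n => ∫ ω, φ (F n ω) ∂P) atTop (nhds (∫ x, φ x ∂μ))) :
    ∃ C : ℝ, ∀ n, ∫ ω, (F n ω) ^ 2 ∂P ≤ C :=
  stmt5_general P c hc F hF4 hmom μ hweak
end

section
/- Let A ⊆ ℝ be a bounded Borel set, let α > 0, and let p_α denote the centered Gaussian density with standard deviation α. Then for every x ∈ ℝ, | ∫₀^{x} ( 1_A(v) − (1_A * p_α)(v) ) dv | ≤ 2√(2/π) · α, where (1_A * p_α)(v) = ∫_ℝ 1_A(v−y) p_α(y) dy. -/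
/-!
With `f = 1_A` and `F t = ∫₀ᵗ f`, the primitive `F` is `1`-Lipschitz. Since the Gaussian
density `p` has mass one, Fubini writes the error as an average over the shift `y`:
`∫₀ˣ (f - f * p) = ∫ p(y) (F(x) - F(x - y) + F(-y) - F(0)) dy`, and the bracket is at most
`2|y|`. So the error is at most twice the first absolute moment `∫ |y| p(y) dy = √(2/π) α`.
-/

open MeasureTheory Real ProbabilityTheory Set
open scoped NNReal

section KernelSmoothing

variable {f p : ℝ → ℝ} {C : ℝ}

lemma intervalIntegrable_of_abs_le (hf : Measurable f) (hfC : ∀ u, |f u| ≤ C) (a b : ℝ) :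
    IntervalIntegrable f volume a b :=
  (intervalIntegrable_const (c := C)).mono_fun hf.aestronglyMeasurable
    (ae_of_all _ fun u => (hfC u).trans (le_abs_self C))

lemma abs_intervalIntegral_sub_comp_sub_le (hf : Measurable f) (hfC : ∀ u, |f u| ≤ C)
    (a b y : ℝ) : |∫ v in a..b, (f v - f (v - y))| ≤ 2 * C * |y| := by
  have hfi := intervalIntegrable_of_abs_le hf hfC
  have hshift (c : ℝ) : |∫ u in c..c - y, f u| ≤ C * |y| := by
    have h := intervalIntegral.norm_integral_le_of_norm_le_const (f := f) (a := c) (b := c - y)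
      fun u _ => hfC u
    rwa [Real.norm_eq_abs, sub_sub_cancel_left, abs_neg] at h
  rw [intervalIntegral.integral_sub (hfi a b)
      (intervalIntegrable_of_abs_le (f := fun v => f (v - y)) (hf.comp (measurable_sub_const y))
        (fun u => hfC _) a b),
    intervalIntegral.integral_comp_sub_right,
    intervalIntegral.integral_interval_sub_interval_comm (hfi _ _) (hfi _ _) (hfi _ _)]
  linarith [abs_sub (∫ u in a..a - y, f u) (∫ u in b..b - y, f u), hshift a, hshift b]

lemma integrable_sub_comp_sub_mul_prod (hf : Measurable f) (hfC : ∀ u, |f u| ≤ C)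
    (hp : Integrable p) (μ : Measure ℝ) [IsFiniteMeasure μ] :
    Integrable (fun z : ℝ × ℝ => (f z.1 - f (z.1 - z.2)) * p z.2) (μ.prod volume) :=
  (hp.comp_snd μ).bdd_mul (c := 2 * C)
    ((hf.comp measurable_fst).sub
      (hf.comp (measurable_fst.sub measurable_snd))).aestronglyMeasurable
    (ae_of_all _ fun z => by
      rw [Real.norm_eq_abs]
      linarith [abs_sub (f z.1) (f (z.1 - z.2)), hfC z.1, hfC (z.1 - z.2)])

lemma sub_integral_comp_sub_mul (hf : Measurable f) (hfC : ∀ u, |f u| ≤ C)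
    (hp : Integrable p) (hp1 : ∫ y, p y = 1) (v : ℝ) :
    f v - ∫ y, f (v - y) * p y = ∫ y, (f v - f (v - y)) * p y := by
  have hint : Integrable fun y => f (v - y) * p y :=
    hp.bdd_mul (c := C) (hf.comp (measurable_const.sub measurable_id)).aestronglyMeasurable
      (ae_of_all _ fun y => (Real.norm_eq_abs _).trans_le (hfC _))
  simp_rw [sub_mul]
  rw [integral_sub (hp.const_mul _) hint, integral_const_mul, hp1, mul_one]

theorem abs_intervalIntegral_sub_integral_comp_sub_mul_le (hf : Measurable f)
    (hfC : ∀ u, |f u| ≤ C) (hp : Integrable p) (hp1 : ∫ y, p y = 1)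
    (hmom : Integrable fun y => y * p y) (a b : ℝ) :
    |∫ v in a..b, (f v - ∫ y, f (v - y) * p y)| ≤ 2 * C * ∫ y, |y * p y| := by
  wlog hab : a ≤ b generalizing a b
  · simpa only [intervalIntegral.integral_symm a b, abs_neg] using this b a (le_of_not_ge hab)
  have hswap : ∫ v in a..b, (f v - ∫ y, f (v - y) * p y)
      = ∫ y, (∫ v in a..b, (f v - f (v - y))) * p y := by
    simp_rw [sub_integral_comp_sub_mul hf hfC hp hp1, intervalIntegral.integral_of_le hab,
      ← integral_mul_const]
    exact integral_integral_swap (integrable_sub_comp_sub_mul_prod hf hfC hp _)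
  rw [hswap, ← integral_const_mul, ← Real.norm_eq_abs]
  refine norm_integral_le_of_norm_le (hmom.abs.const_mul _) (ae_of_all _ fun y => ?_)
  calc ‖(∫ v in a..b, (f v - f (v - y))) * p y‖
      = |∫ v in a..b, (f v - f (v - y))| * |p y| := by rw [Real.norm_eq_abs, abs_mul]
    _ ≤ 2 * C * |y| * |p y| := by
      gcongr; exact abs_intervalIntegral_sub_comp_sub_le hf hfC a b y
    _ = 2 * C * |y * p y| := by rw [abs_mul, mul_assoc]

end KernelSmoothing

lemma integral_Ioi_mul_exp_neg_mul_sq {b : ℝ} (hb : 0 < b) :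
    ∫ x in Ioi (0 : ℝ), x * exp (-b * x ^ 2) = (2 * b)⁻¹ := by
  exact_mod_cast integral_mul_cexp_neg_mul_sq (b := (b : ℂ)) (by simpa using hb)

lemma integral_abs_mul_exp_neg_mul_sq {b : ℝ} (hb : 0 < b) :
    ∫ x, |x * exp (-b * x ^ 2)| = b⁻¹ := by
  have h := integral_comp_abs (f := fun x => x * exp (-b * x ^ 2))
  simp only [sq_abs] at h
  simp_rw [abs_mul, abs_exp]
  rw [h, integral_Ioi_mul_exp_neg_mul_sq hb]
  field_simp

lemma gaussianPDFReal_zero_apply (v : ℝ≥0) (x : ℝ) :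
    gaussianPDFReal 0 v x = (√(2 * π * v))⁻¹ * exp (-(2 * v : ℝ)⁻¹ * x ^ 2) := by
  rw [gaussianPDFReal, sub_zero, neg_div, div_eq_inv_mul, neg_mul]

lemma integrable_mul_gaussianPDFReal (v : ℝ≥0) :
    Integrable fun x => x * gaussianPDFReal 0 v x := by
  rcases eq_or_ne v 0 with rfl | hv
  · simp
  simp_rw [gaussianPDFReal_zero_apply, mul_left_comm _ (√(2 * π * v))⁻¹]
  exact (integrable_mul_exp_neg_mul_sq (by positivity)).const_mul _

lemma integral_abs_mul_gaussianPDFReal (v : ℝ≥0) :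
    ∫ x, |x * gaussianPDFReal 0 v x| = √(2 / π) * √v := by
  rcases eq_or_ne v 0 with rfl | hv
  · simp
  simp_rw [gaussianPDFReal_zero_apply, mul_left_comm _ (√(2 * π * v))⁻¹,
    abs_mul (√(2 * π * v))⁻¹]
  rw [integral_const_mul, integral_abs_mul_exp_neg_mul_sq (by positivity),
    abs_of_pos (by positivity), inv_inv, ← sqrt_mul (by positivity), eq_comm,
    sqrt_eq_iff_eq_sq (by positivity) (by positivity), mul_pow, inv_pow, sq_sqrt (by positivity)]
  field_simp

theorem stmt8_general (A : Set ℝ) (hA : MeasurableSet A)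
    (α : ℝ) (hα : 0 < α)
    (pα : ℝ → ℝ)
    (hpα : ∀ x, pα x = (1 / (α * Real.sqrt (2 * Real.pi))) * Real.exp (-(x ^ 2) / (2 * α ^ 2))) :
    ∀ x : ℝ,
      |∫ v in (0 : ℝ)..x,
          (A.indicator (fun _ => (1 : ℝ)) v - ∫ y, A.indicator (fun _ => (1 : ℝ)) (v - y) * pα y)|
        ≤ 2 * Real.sqrt (2 / Real.pi) * α := by
  intro x
  set v : ℝ≥0 := ⟨α ^ 2, sq_nonneg α⟩
  have hvα : (v : ℝ) = α ^ 2 := rfl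
  have hv : v ≠ 0 := by rw [← NNReal.coe_ne_zero, hvα]; positivity
  obtain rfl : pα = gaussianPDFReal 0 v := by
    funext y
    rw [hpα, gaussianPDFReal, hvα, sub_zero, sqrt_mul' _ (sq_nonneg α), sqrt_sq hα.le]
    ring
  have hA1 (u : ℝ) : |A.indicator (fun _ => (1 : ℝ)) u| ≤ 1 := by
    by_cases hu : u ∈ A <;> simp [hu]
  have h := abs_intervalIntegral_sub_integral_comp_sub_mul_le (measurable_const.indicator hA) hA1
    (integrable_gaussianPDFReal 0 v) (integral_gaussianPDFReal_eq_one 0 hv)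
    (integrable_mul_gaussianPDFReal v) 0 x
  rwa [integral_abs_mul_gaussianPDFReal, hvα, sqrt_sq hα.le, mul_one, ← mul_assoc] at h

/-- For a bounded Borel set `A ⊆ ℝ` and `α > 0`,
`|∫₀ˣ (1_A(v) - (1_A * p_α)(v)) dv| ≤ 2√(2/π) α` for every `x ∈ ℝ`, where `p_α` is the
centered Gaussian density with standard deviation `α`. -/
theorem stmt8 (A : Set ℝ) (hA : MeasurableSet A) (hAbdd : Bornology.IsBounded A)
    (α : ℝ) (hα : 0 < α)
    (pα : ℝ → ℝ)
    (hpα : ∀ x, pα x = (1 / (α * Real.sqrt (2 * Real.pi))) * Real.exp (-(x ^ 2) / (2 * α ^ 2))) :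
    ∀ x : ℝ,
      |∫ v in (0 : ℝ)..x,
          (A.indicator (fun _ => (1 : ℝ)) v - ∫ y, A.indicator (fun _ => (1 : ℝ)) (v - y) * pα y)|
        ≤ 2 * Real.sqrt (2 / Real.pi) * α :=
  stmt8_general A hA α hα pα hpα
end

section
/- Let d ≥ 1, M ≥ 1, and let φ : ℝ^d → ℝ be a continuous function with support contained in [−M, M]^d. Define T[φ](x₁,…,x_d) = ∫₀^{x₁} ⋯ ∫₀^{x_d} φ(t₁,…,t_d) dt_d ⋯ dt₁. Then for all x, y ∈ ℝ^d, |T[φ](x) − T[φ](y)| ≤ M^{d−1} · ‖φ‖_∞ · Σ_{i=1}^d |x_i − y_i|. -/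
/-!
Each integration `∫₀^{x_k}` only sees the part of `[0, x_k]` inside `[-M, M]`, so it multiplies
sup-bounds by at most `M`; hence `|T_k[φ]| ≤ M^k ‖φ‖_∞` for the partial iterated integrals. Moving
the `i`-th coordinate of the point from `s` to `x_i` changes the `i`-th integral by one over an
interval of length `|x_i - s|` of an integrand bounded by `M^i ‖φ‖_∞`, and the remaining
integrations cost a factor `M` each, giving `M^{d-1} ‖φ‖_∞ |x_i - s|`. Moving the coordinates one
at a time yields the `ℓ¹` bound.
-/

open MeasureTheory

/-- The iterated signed one-dimensional integral of `φ` in its first `k` coordinates: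
`iterT d k φ x = ∫₀^{x₁} ⋯ ∫₀^{x_k} φ(t₁,…,t_k, x_{k+1},…,x_d) dt_k ⋯ dt₁`. In particular
`iterT d d φ x = T[φ](x) = ∫₀^{x₁} ⋯ ∫₀^{x_d} φ(t₁,…,t_d) dt_d ⋯ dt₁`. -/
noncomputable def iterT (d : ℕ) : ℕ → ((Fin d → ℝ) → ℝ) → (Fin d → ℝ) → ℝ
  | 0, φ, x => φ x
  | (k + 1), φ, x =>
    if h : k < d then
      ∫ t in (0 : ℝ)..(x ⟨k, h⟩), iterT d k φ (Function.update x ⟨k, h⟩ t)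
    else iterT d k φ x

open Set Function
open scoped Interval

theorem abs_intervalIntegral_le_of_support_subset {g : ℝ → ℝ} {M B : ℝ} (hM : 0 ≤ M)
    (hg : support g ⊆ Icc (-M) M) (hB : ∀ t, |g t| ≤ B) (a : ℝ) :
    |∫ t in (0 : ℝ)..a, g t| ≤ M * B := by
  have hvol : volume.real (Ι 0 a ∩ Icc (-M) M) ≤ M := by
    rcases le_total 0 a with ha | ha
    · calc _ ≤ volume.real (Icc 0 M) := measureReal_mono (by
            rw [uIoc_of_le ha]; exact fun t ht => ⟨ht.1.1.le, ht.2.2⟩) measure_Icc_lt_top.ne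
        _ = M := by simp [hM]
    · calc _ ≤ volume.real (Icc (-M) 0) := measureReal_mono (by
            rw [uIoc_of_ge ha]; exact fun t ht => ⟨ht.2.1, ht.1.2⟩) measure_Icc_lt_top.ne
        _ = M := by simp [hM]
  have hfin : volume (Ι 0 a ∩ Icc (-M) M) < ⊤ :=
    (measure_mono inter_subset_right).trans_lt measure_Icc_lt_top
  rw [← Real.norm_eq_abs, intervalIntegral.norm_integral_eq_norm_integral_uIoc,
    ← indicator_eq_self.2 hg, setIntegral_indicator measurableSet_Icc]
  calc _ ≤ B * volume.real (Ι 0 a ∩ Icc (-M) M) :=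
        norm_setIntegral_le_of_norm_le_const hfin fun t _ => hB t
    _ ≤ B * M := by gcongr; exact (abs_nonneg _).trans (hB 0)
    _ = M * B := mul_comm _ _

theorem abs_sub_le_mul_sum_of_abs_sub_update_le {ι : Type*} [Fintype ι] [DecidableEq ι]
    {F : (ι → ℝ) → ℝ} {L : ℝ} (hF : ∀ z i s, |F z - F (update z i s)| ≤ L * |z i - s|)
    (x y : ι → ℝ) : |F x - F y| ≤ L * ∑ i, |x i - y i| := by
  suffices ∀ s : Finset ι, ∀ x, (∀ i ∉ s, x i = y i) → |F x - F y| ≤ L * ∑ i ∈ s, |x i - y i| from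
    this Finset.univ x fun i hi => absurd (Finset.mem_univ i) hi
  intro s
  induction s using Finset.induction_on with
  | empty =>
    intro x hx
    simp [funext fun i => hx i (Finset.notMem_empty i)]
  | insert i s hi ih =>
    intro x hx
    have hx' : ∀ j ∉ s, update x i (y i) j = y j := by
      intro j hj
      rcases eq_or_ne j i with rfl | hji
      · exact update_self ..
      · rw [update_of_ne hji]; exact hx j (by simp [hji, hj])
    have hsum : ∑ j ∈ s, |update x i (y i) j - y j| = ∑ j ∈ s, |x j - y j| :=
      Finset.sum_congr rfl fun j hj => by rw [update_of_ne (ne_of_mem_of_not_mem hj hi)]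
    calc |F x - F y| ≤ |F x - F (update x i (y i))| + |F (update x i (y i)) - F y| :=
          abs_sub_le _ _ _
      _ ≤ L * |x i - y i| + L * ∑ j ∈ s, |x j - y j| := by
        gcongr
        · exact hF x i (y i)
        · exact hsum ▸ ih _ hx'
      _ = L * ∑ j ∈ insert i s, |x j - y j| := by rw [Finset.sum_insert hi, mul_add]

section IteratedIntegral

variable {d : ℕ} {φ : (Fin d → ℝ) → ℝ} {M C : ℝ}

theorem iterT_succ {k : ℕ} (hk : k < d) (x : Fin d → ℝ) :
    iterT d (k + 1) φ x = ∫ t in (0 : ℝ)..x ⟨k, hk⟩, iterT d k φ (update x ⟨k, hk⟩ t) := by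
  rw [iterT, dif_pos hk]

theorem continuous_iterT (hφ : Continuous φ) : ∀ k, Continuous (iterT d k φ)
  | 0 => hφ
  | k + 1 => by
    by_cases hk : k < d
    · rw [funext (iterT_succ hk)]
      exact intervalIntegral.continuous_parametric_intervalIntegral_of_continuous
        (f := fun x t => iterT d k φ (update x ⟨k, hk⟩ t))
        ((continuous_iterT hφ k).comp (continuous_fst.update _ continuous_snd)) (continuous_apply _)
    · simpa only [iterT, dif_neg hk] using continuous_iterT hφ k

theorem intervalIntegrable_iterT_update (hφ : Continuous φ) (k : ℕ) (z : Fin d → ℝ) (j : Fin d)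
    (a b : ℝ) : IntervalIntegrable (fun t => iterT d k φ (update z j t)) volume a b :=
  ((continuous_iterT hφ k).comp (continuous_const.update j continuous_id)).intervalIntegrable a b

theorem iterT_eq_zero_of_notMem (hφ : support φ ⊆ Icc (fun _ => -M) (fun _ => M)) :
    ∀ {k : ℕ} {j : Fin d}, k ≤ j → ∀ {z : Fin d → ℝ}, z j ∉ Icc (-M) M → iterT d k φ z = 0
  | 0, j, _, z, hz => notMem_support.1 fun h => hz ⟨(hφ h).1 j, (hφ h).2 j⟩
  | k + 1, j, hkj, z, hz => by
    by_cases hk : k < d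
    · have hne : j ≠ ⟨k, hk⟩ := Fin.ne_of_val_ne (show (j : ℕ) ≠ k by omega)
      rw [iterT_succ hk]
      exact intervalIntegral.integral_zero_ae (.of_forall fun t _ =>
        iterT_eq_zero_of_notMem hφ (j := j) (by omega) (by rwa [update_of_ne hne]))
    · rw [iterT, dif_neg hk]
      exact iterT_eq_zero_of_notMem hφ (j := j) (by omega) hz

theorem support_iterT_update_subset (hφ : support φ ⊆ Icc (fun _ => -M) (fun _ => M))
    {k : ℕ} (j : Fin d) (hkj : k ≤ j) (z : Fin d → ℝ) :
    support (fun t => iterT d k φ (update z j t)) ⊆ Icc (-M) M := fun t ht =>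
  by_contra fun h => ht (iterT_eq_zero_of_notMem hφ hkj (by rwa [update_self]))

theorem abs_iterT_le (hφ : support φ ⊆ Icc (fun _ => -M) (fun _ => M)) (hM : 0 ≤ M)
    (hC : ∀ z, |φ z| ≤ C) : ∀ {k : ℕ}, k ≤ d → ∀ z, |iterT d k φ z| ≤ M ^ k * C
  | 0, _, z => by simpa [iterT] using hC z
  | k + 1, hk, z => by
    rw [iterT_succ hk, pow_succ', mul_assoc]
    exact abs_intervalIntegral_le_of_support_subset hM
      (support_iterT_update_subset hφ ⟨k, hk⟩ le_rfl z)
      (fun t => abs_iterT_le hφ hM hC (Nat.le_of_succ_le hk) _) _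

theorem abs_iterT_sub_iterT_update_le (hφc : Continuous φ)
    (hφ : support φ ⊆ Icc (fun _ => -M) (fun _ => M)) (hM : 0 ≤ M) (hC : ∀ z, |φ z| ≤ C) :
    ∀ {k : ℕ}, k ≤ d → ∀ i : Fin d, (i : ℕ) < k → ∀ z s,
      |iterT d k φ z - iterT d k φ (update z i s)| ≤ M ^ (k - 1) * C * |z i - s|
  | 0, _, _, hi, _, _ => absurd hi (Nat.not_lt_zero _)
  | k + 1, hk, i, hi, z, s => by
    have hkd : k < d := hk
    rw [iterT_succ hkd, iterT_succ hkd, Nat.add_sub_cancel]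
    rcases Nat.lt_succ_iff_lt_or_eq.mp hi with hik | rfl
    · have hne : i ≠ ⟨k, hkd⟩ := Fin.ne_of_val_ne hik.ne
      rw [update_of_ne hne.symm, ← intervalIntegral.integral_sub
        (intervalIntegrable_iterT_update hφc ..) (intervalIntegrable_iterT_update hφc ..)]
      calc _ ≤ M * (M ^ (k - 1) * C * |z i - s|) :=
            abs_intervalIntegral_le_of_support_subset hM
              ((support_sub _ _).trans
                (union_subset (support_iterT_update_subset hφ ⟨k, hkd⟩ le_rfl z)
                  (support_iterT_update_subset hφ ⟨k, hkd⟩ le_rfl _)))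
              (fun t => by
                rw [update_comm hne s t z]
                simpa only [update_of_ne hne] using abs_iterT_sub_iterT_update_le hφc hφ hM hC
                  (Nat.le_of_succ_le hk) i hik (update z ⟨k, hkd⟩ t) s) _
        _ = M ^ k * C * |z i - s| := by rw [← mul_pow_sub_one (by omega : k ≠ 0)]; ring
    · simp only [update_self, update_idem]
      rw [intervalIntegral.integral_interval_sub_left
        (intervalIntegrable_iterT_update hφc ..) (intervalIntegrable_iterT_update hφc ..)]
      simpa only [Real.norm_eq_abs] using intervalIntegral.norm_integral_le_of_norm_le_const
        fun t _ => (Real.norm_eq_abs _).trans_le (abs_iterT_le hφ hM hC hkd.le _)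

end IteratedIntegral

theorem stmt10_general (d : ℕ) (M : ℝ) (hM : 1 ≤ M)
    (φ : (Fin d → ℝ) → ℝ) (hφc : Continuous φ)
    (hφsupp : Function.support φ ⊆ Set.Icc (fun _ => -M) (fun _ => M))
    (x y : Fin d → ℝ) :
    |iterT d d φ x - iterT d d φ y| ≤ M ^ (d - 1) * (⨆ z, |φ z|) * ∑ i, |x i - y i| := by
  have hbdd : BddAbove (range fun z => |φ z|) :=
    hφc.abs.bddAbove_range_of_hasCompactSupport
      (HasCompactSupport.intro isCompact_Icc fun z hz =>
        notMem_support.1 fun h => hz (hφsupp h)).abs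
  exact abs_sub_le_mul_sum_of_abs_sub_update_le (fun z i s =>
    abs_iterT_sub_iterT_update_le hφc hφsupp (zero_le_one.trans hM) (le_ciSup hbdd) le_rfl
      i i.isLt z s) x y

/-- For continuous `φ : ℝ^d → ℝ` supported in `[-M, M]^d` (`M ≥ 1`),
the function `T[φ]` is Lipschitz for the `ℓ¹`-norm:
`|T[φ](x) - T[φ](y)| ≤ M^{d-1} ‖φ‖_∞ Σᵢ |xᵢ - yᵢ|`. -/
theorem stmt10 (d : ℕ) (hd : 1 ≤ d) (M : ℝ) (hM : 1 ≤ M)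
    (φ : (Fin d → ℝ) → ℝ) (hφc : Continuous φ)
    (hφsupp : Function.support φ ⊆ Set.Icc (fun _ => -M) (fun _ => M))
    (x y : Fin d → ℝ) :
    |iterT d d φ x - iterT d d φ y| ≤ M ^ (d - 1) * (⨆ z, |φ z|) * ∑ i, |x i - y i| :=
  stmt10_general d M hM φ hφc hφsupp x y
end
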